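/- For a vertex v of YF with v = α_1 α_2 ... α_n (each α_i ∈ {1,2}), one has f(v,0,z) = d_1(ε, v)/|v|! for every 0 ≤ z ≤ n, where f(v,0,0) = 1/((α_n)(α_n + α_{n-1})···(α_n + ··· + α_1)), d_1(ε,v) is the number of saturated decreasing paths from v to the empty word in YF, and |v| is the digit sum of v. -/

import Mathlib

open Filter

/-- Words over {1,2}: `true` encodes the digit 2, `false` encodes the digit 1. -/
abbrev W := List Bool

/-- Digit sum of a word. -/
def dsum (x : W) : ℕ := (x.map fun c => if c then 2 else 1).sum

/-- Downward edge relation in the Young–Fibonacci graph `YF`: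
either delete the leftmost 1, or replace a 2 lying to the left of the leftmost 1 by a 1. -/
def down (x y : W) : Prop :=
  (∃ p s, (∀ c ∈ p, c = true) ∧ x = p ++ false :: s ∧ y = p ++ s) ∨
  (∃ p s, (∀ c ∈ p, c = true) ∧ x = p ++ true :: s ∧ y = p ++ false :: s)

/-- `d1 w v` = number of saturated decreasing paths from `v` down to `w` in `YF`. -/
noncomputable def d1 (w v : W) : ℕ :=
  Nat.card {L : List W // List.Chain down v L ∧ (v :: L).getLast (List.cons_ne_nil _ _) = w}

/-- Symbols of `YF^r`: `none` encodes 2, `some i` encodes the indexed one `1_i`. -/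
abbrev SymR (r : ℕ) := Option (Fin r)

/-- Downward edge relation in `YF^r`. -/
def downR {r : ℕ} (x y : List (SymR r)) : Prop :=
  (∃ (p s : List (SymR r)) (i : Fin r), (∀ c ∈ p, c = none) ∧ x = p ++ some i :: s ∧ y = p ++ s) ∨
  (∃ (p s : List (SymR r)) (i : Fin r), (∀ c ∈ p, c = none) ∧ x = p ++ none :: s ∧ y = p ++ some i :: s)

/-- Number of saturated decreasing paths from `v` down to `w` in `YF^r`. -/
noncomputable def dR {r : ℕ} (w v : List (SymR r)) : ℕ :=
  Nat.card {L : List (List (SymR r)) //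
    List.Chain downR v L ∧ (v :: L).getLast (List.cons_ne_nil _ _) = w}

/-- The index-forgetting map `s : YF^r → YF`. -/
def forget {r : ℕ} (x : List (SymR r)) : W := x.map fun c => c.isNone

/-- Index (0-based, from the head) of the `k`-th `true` in a list (`k ≥ 1`); junk if absent. -/
def idxTrue : List Bool → ℕ → ℕ
  | [], _ => 0
  | false :: xs, k => idxTrue xs k + 1
  | true :: xs, k => if k ≤ 1 then 0 else idxTrue xs (k - 1) + 1

/-- `gv x k = β₀ + ⋯ + β_{k-1} + 2k - 1` where the `βᵢ` are the blocks of 1's of `x`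
read from the right; equivalently (number of symbols to the right of the k-th 2) + k. -/
def gv (x : W) (k : ℕ) : ℕ := idxTrue x.reverse k + k

/-- `pik x i = ∏_{j : gv x j > i} (gv x j - i) / gv x j`. -/
noncomputable def pik (x : W) (i : ℕ) : ℝ :=
  ∏ j ∈ Finset.Icc 1 (x.count true),
    if i < gv x j then ((gv x j : ℝ) - i) / gv x j else 1

/-- `π(x) = ∏_{j : gv x j > 1} (gv x j - 1)/gv x j`. -/
noncomputable def piW (x : W) : ℝ := pik x 1

/-- Number of 2's among the first `t+1` symbols (from the right) of a left-infinite word. -/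
def twoCount (v : ℕ → Bool) (t : ℕ) : ℕ := ((Finset.range (t + 1)).filter fun s => v s = true).card

/-- `gInf v k`: for a left-infinite word `v` (position 0 = rightmost symbol),
the position of the `k`-th 2 from the right plus `k`. -/
noncomputable def gInf (v : ℕ → Bool) (k : ℕ) : ℕ := sInf {t | k ≤ twoCount v t} + k

open Classical in
/-- `pikInf v i = ∏_{j : gInf v j > i} (gInf v j - i)/gInf v j` for a left-infinite word. -/
noncomputable def pikInf (v : ℕ → Bool) (i : ℕ) : ℝ :=
  ∏' j : ℕ,
    if 1 ≤ j ∧ (∃ t, j ≤ twoCount v t) ∧ i < gInf v j then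
      ((gInf v j : ℝ) - i) / gInf v j
    else 1

noncomputable def piInf (v : ℕ → Bool) : ℝ := pikInf v 1

/-- `psum l k`: digit sum of the first `k` entries of `l`
(where `l` is a word written in reverse, head = last letter). -/
def psum (l : List Bool) (k : ℕ) : ℕ := dsum (l.take k)

open Classical in
/-- The base case `f(x, y, 0)` of Goodman–Kerov's function `f`, for the word `x` given
by the reversed list `l`:  if `y` is a partial sum of the digits of `x` from the right
(i.e. `x` splits as a prefix and a suffix of digit sum `y`), the value
`(-1)^{n-m} / [(α_{m+1})(α_{m+1}+α_{m+2})⋯] ⋅ 1/[(α_m)(α_m+α_{m-1})⋯]`,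
rewritten as `∏_{k ≠ split} 1/(P_k - y)` where `P_k` are the partial sums from the right;
otherwise `0`. -/
noncomputable def f0 (l : List Bool) (y : ℕ) : ℝ :=
  if ∃ k ≤ l.length, psum l k = y then
    ∏ k ∈ Finset.range (l.length + 1),
      (if psum l k = y then 1 else 1 / ((psum l k : ℝ) - (y : ℝ)))
  else 0

/-- Goodman–Kerov's function `f(x, y, z)`; the word `x` is given by the reversed list
(head = last letter, `true` = 2, `false` = 1). -/
noncomputable def fF : List Bool → ℕ → ℕ → ℝ
  | l, y, 0 => f0 l y
  | [], y, _ + 1 => f0 [] y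
  | false :: x, 0, _ + 1 => f0 (false :: x) 0
  | false :: x, y + 1, z + 1 => f0 (false :: x) (y + 1) + fF x y z
  | true :: x, y, z + 1 =>
      if y = 1 then 0 else fF (false :: false :: x) y (z + 2) / (1 - (y : ℝ))
  termination_by l _ _ => (l.count true, l.length)

/-! ### Auxiliary lemmas -/

lemma dsum_cons (c : Bool) (s : W) : dsum (c :: s) = (if c then 2 else 1) + dsum s := by
  simp [dsum]

lemma dsum_append (a b : W) : dsum (a ++ b) = dsum a + dsum b := by
  simp [dsum]

lemma dsum_reverse (l : W) : dsum l.reverse = dsum l := by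
  rw [dsum, dsum, List.map_reverse, List.sum_reverse]

lemma dsum_pos {l : W} (h : l ≠ []) : 0 < dsum l := by
  cases l with
  | nil => simp at h
  | cons c s => cases c <;> simp [dsum_cons]

/-- Product of the partial digit sums from the right: `Qd v = P_1 P_2 ⋯ P_n`. -/
def Qd : W → ℕ
  | [] => 1
  | c :: s => dsum (c :: s) * Qd s

lemma Qd_pos (v : W) : 0 < Qd v := by
  induction v with
  | nil => simp [Qd]
  | cons c s ih => exact Nat.mul_pos (dsum_pos (by simp)) ih

/-- Explicit list of covers (elements immediately below `v`) in `YF`. -/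
def coversL : W → List W
  | [] => []
  | false :: s => [s]
  | true :: s => (false :: s) :: (coversL s).map (true :: ·)

lemma coversL_nodup (v : W) : (coversL v).Nodup := by
  induction v with
  | nil => simp [coversL]
  | cons c s ih =>
    cases c with
    | false => simp [coversL]
    | true =>
      refine List.nodup_cons.mpr ⟨?_, ih.map fun a b h => by injection h⟩
      intro h
      rcases List.mem_map.mp h with ⟨y, _, hy⟩
      exact Bool.noConfusion (List.head_eq_of_cons_eq hy)

lemma down_dsum {v y : W} (h : down v y) : dsum y + 1 = dsum v := by
  rcases h with ⟨p, s, _, rfl, rfl⟩ | ⟨p, s, _, rfl, rfl⟩ <;>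
    simp [dsum_append, dsum_cons] <;> omega

lemma mem_coversL {v y : W} : y ∈ coversL v ↔ down v y := by
  induction v generalizing y with
  | nil =>
    simp only [coversL, List.not_mem_nil, false_iff]
    rintro (⟨p, s, hp, hx, hy⟩ | ⟨p, s, hp, hx, hy⟩) <;> simp at hx
  | cons c s ih =>
    cases c with
    | false =>
      simp only [coversL, List.mem_singleton]
      constructor
      · intro h
        rw [h]
        exact Or.inl ⟨[], s, by simp, rfl, rfl⟩
      · rintro (⟨p, s', hp, hx, hy⟩ | ⟨p, s', hp, hx, hy⟩)
        · cases p with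
          | nil =>
            simp only [List.nil_append] at hx hy
            obtain ⟨-, hs⟩ := List.cons_eq_cons.mp hx
            rw [hy, hs]
          | cons a p' =>
            have ha := hp a (by simp)
            rw [ha] at hx
            exact Bool.noConfusion (List.head_eq_of_cons_eq hx)
        · cases p with
          | nil =>
            simp only [List.nil_append] at hx
            exact Bool.noConfusion (List.head_eq_of_cons_eq hx)
          | cons a p' =>
            have ha := hp a (by simp)
            rw [ha] at hx
            exact Bool.noConfusion (List.head_eq_of_cons_eq hx)
    | true =>
      simp only [coversL, List.mem_cons, List.mem_map]
      constructor
      · rintro (rfl | ⟨y', hy', rfl⟩)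
        · exact Or.inr ⟨[], s, by simp, rfl, rfl⟩
        · rcases ih.mp hy' with ⟨p, s', hp, hx, hy⟩ | ⟨p, s', hp, hx, hy⟩
          · exact Or.inl ⟨true :: p, s', by
              intro c hc
              rcases List.mem_cons.mp hc with rfl | hc
              · rfl
              · exact hp c hc, by rw [hx]; rfl, by rw [hy]; rfl⟩
          · exact Or.inr ⟨true :: p, s', by
              intro c hc
              rcases List.mem_cons.mp hc with rfl | hc
              · rfl
              · exact hp c hc, by rw [hx]; rfl, by rw [hy]; rfl⟩
      · rintro (⟨p, s', hp, hx, hy⟩ | ⟨p, s', hp, hx, hy⟩)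
        · cases p with
          | nil =>
            simp only [List.nil_append] at hx
            exact Bool.noConfusion (List.head_eq_of_cons_eq hx)
          | cons a p' =>
            obtain ⟨ha, hs⟩ := List.cons_eq_cons.mp hx
            refine Or.inr ⟨p' ++ s', ih.mpr (Or.inl ⟨p', s', fun c hc => hp c (by simp [hc]), hs, rfl⟩), ?_⟩
            simp [hy, ← ha]
        · cases p with
          | nil =>
            obtain ⟨-, hs⟩ := List.cons_eq_cons.mp hx
            exact Or.inl (by simp [hy, hs])
          | cons a p' =>
            obtain ⟨ha, hs⟩ := List.cons_eq_cons.mp hx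
            refine Or.inr ⟨p' ++ false :: s', ih.mpr (Or.inr ⟨p', s', fun c hc => hp c (by simp [hc]), hs, rfl⟩), ?_⟩
            simp [hy, ← ha]

lemma dsum_of_mem_coversL {v y : W} (h : y ∈ coversL v) : dsum y + 1 = dsum v :=
  down_dsum (mem_coversL.mp h)

/-- The key harmonic identity: `∑_{y ⋖ v} 1/Qd y = dsum v / Qd v`. -/
lemma key_sum (v : W) :
    ((coversL v).map (fun y => 1 / (Qd y : ℝ))).sum = (dsum v : ℝ) / (Qd v : ℝ) := by
  induction v with
  | nil => simp [coversL, Qd, dsum]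
  | cons c s ih =>
    have hQs : (0:ℝ) < (Qd s : ℝ) := by exact_mod_cast Qd_pos s
    cases c with
    | false =>
      have hD : (0:ℝ) < (dsum (false :: s) : ℝ) := by
        exact_mod_cast dsum_pos (l := false :: s) (by simp)
      simp only [coversL, List.map_cons, List.map_nil, List.sum_cons, List.sum_nil, add_zero,
        Qd, Nat.cast_mul]
      field_simp
    | true =>
      have hmap : (coversL s).map ((fun y => 1 / (Qd y : ℝ)) ∘ (true :: ·)) =
          (coversL s).map (fun y => (1 / ((1 : ℝ) + (dsum s : ℝ))) * (1 / (Qd y : ℝ))) := by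
        apply List.map_congr_left
        intro y hy
        have h1 : dsum y + 1 = dsum s := dsum_of_mem_coversL hy
        have h2 : Qd (true :: y) = (1 + dsum s) * Qd y := by
          rw [Qd, dsum_cons]
          simp only [if_true]
          congr 1
          omega
        simp only [Function.comp_apply, h2, Nat.cast_mul, Nat.cast_add, Nat.cast_one]
        rw [← one_div_mul_one_div]
      have hQ : (Qd (true :: s) : ℝ) = ((2 : ℝ) + (dsum s : ℝ)) * (Qd s : ℝ) := by
        simp only [Qd, dsum_cons, if_true]; push_cast; ring
      have hQf : (Qd (false :: s) : ℝ) = ((1 : ℝ) + (dsum s : ℝ)) * (Qd s : ℝ) := by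
        simp only [Qd, dsum_cons, Bool.false_eq_true, if_false]; push_cast; ring
      simp only [coversL, List.map_cons, List.sum_cons, List.map_map, hmap,
        List.sum_map_mul_left, ih, hQ, hQf, dsum_cons, if_true]
      have h1 : (0:ℝ) < 1 + (dsum s : ℝ) := by positivity
      have h2 : (0:ℝ) < 2 + (dsum s : ℝ) := by positivity
      push_cast
      field_simp

/-- The type of saturated decreasing chains from `v` to the empty word. -/
abbrev ChainsTo (v : W) : Type :=
  {L : List W // List.Chain down v L ∧ (v :: L).getLast (List.cons_ne_nil _ _) = ([] : W)}

lemma d1_eq (v : W) : d1 [] v = Nat.card (ChainsTo v) := rfl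

lemma chainsTo_nil_val {L : List W}
    (h : List.Chain down [] L ∧ (([] : W) :: L).getLast (List.cons_ne_nil _ _) = ([] : W)) :
    L = [] := by
  cases L with
  | nil => rfl
  | cons y L' =>
    exfalso
    have hd : down [] y := (List.chain_cons.mp h.1).1
    rcases hd with ⟨p, s, _, hx, _⟩ | ⟨p, s, _, hx, _⟩ <;> simp at hx

instance : Unique (ChainsTo []) where
  default := ⟨[], List.Chain.nil, rfl⟩
  uniq := fun L => Subtype.ext (chainsTo_nil_val L.2)

/-- Chains from a nonempty `v` decompose as a first step to a cover plus a chain. -/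
def chainsToEquiv (v : W) (hv : v ≠ []) :
    ChainsTo v ≃ Σ y : {y // y ∈ (coversL v).toFinset}, ChainsTo y.1 where
  toFun := fun ⟨L, hL⟩ =>
    match L, hL with
    | [], ⟨_, hlast⟩ => absurd hlast hv
    | y :: L', ⟨hch, hlast⟩ =>
      ⟨⟨y, by
          rw [List.mem_toFinset]
          exact mem_coversL.mpr (List.chain_cons.mp hch).1⟩,
        ⟨L', (List.chain_cons.mp hch).2, by
          rw [← hlast, List.getLast_cons (List.cons_ne_nil _ _)]⟩⟩
  invFun := fun ⟨⟨y, hy⟩, ⟨L, hch, hlast⟩⟩ =>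
    ⟨y :: L, List.chain_cons.mpr ⟨mem_coversL.mp (List.mem_toFinset.mp hy), hch⟩, by
      rw [List.getLast_cons (List.cons_ne_nil _ _)]; exact hlast⟩
  left_inv := fun ⟨L, hL⟩ => by
    match L, hL with
    | [], ⟨_, hlast⟩ => exact absurd hlast hv
    | y :: L', ⟨hch, hlast⟩ => rfl
  right_inv := fun ⟨⟨y, hy⟩, ⟨L, hch, hlast⟩⟩ => rfl

lemma chainsTo_finite : ∀ (n : ℕ) (v : W), dsum v = n → Finite (ChainsTo v) := by
  intro n
  induction n using Nat.strong_induction_on with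
  | _ n ih =>
    intro v hn
    rcases eq_or_ne v [] with rfl | hv
    · infer_instance
    · haveI : ∀ y : {y // y ∈ (coversL v).toFinset}, Finite (ChainsTo y.1) := by
        rintro ⟨y, hy⟩
        have hd := dsum_of_mem_coversL (List.mem_toFinset.mp hy)
        exact ih (dsum y) (by omega) y rfl
      exact Finite.of_equiv _ (chainsToEquiv v hv).symm

instance (v : W) : Finite (ChainsTo v) := chainsTo_finite (dsum v) v rfl

lemma nat_card_sigma {ι : Type*} [Fintype ι] (f : ι → Type*) [∀ i, Finite (f i)] :
    Nat.card ((i : ι) × f i) = ∑ i, Nat.card (f i) := by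
  letI : ∀ i, Fintype (f i) := fun i => Fintype.ofFinite (f i)
  simp [Nat.card_eq_fintype_card, Fintype.card_sigma]

lemma d1_rec (v : W) (hv : v ≠ []) : d1 [] v = ((coversL v).map (d1 [])).sum := by
  classical
  rw [d1_eq, Nat.card_congr (chainsToEquiv v hv), nat_card_sigma]
  rw [Finset.sum_coe_sort ((coversL v).toFinset) (fun y => Nat.card (ChainsTo y))]
  rw [List.sum_toFinset _ (coversL_nodup v)]
  rfl

/-- `d_1(ε,v) ⋅ Qd v = |v|!`. -/
lemma d1_mul_Qd : ∀ (n : ℕ) (v : W), dsum v = n →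
    (d1 [] v : ℝ) * (Qd v : ℝ) = (Nat.factorial (dsum v) : ℝ) := by
  intro n
  induction n using Nat.strong_induction_on with
  | _ n ih =>
    intro v hn
    rcases eq_or_ne v [] with rfl | hv
    · rw [d1_eq, Nat.card_unique]
      simp [Qd, dsum]
    · have hNpos : 0 < dsum v := dsum_pos hv
      rw [d1_rec v hv]
      have hcast : (((coversL v).map (d1 [])).sum : ℝ) =
          ((coversL v).map (fun y => (d1 [] y : ℝ))).sum := by
        rw [Nat.cast_list_sum, List.map_map]
        rfl
      obtain ⟨m, hm⟩ : ∃ m, dsum v = m + 1 := ⟨dsum v - 1, by omega⟩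
      have hmap2 : (coversL v).map (fun y => (d1 [] y : ℝ)) =
          (coversL v).map (fun y => (Nat.factorial m : ℝ) * (1 / (Qd y : ℝ))) := by
        apply List.map_congr_left
        intro y hy
        have hd := dsum_of_mem_coversL hy
        have h1 := ih (dsum y) (by omega) y rfl
        have h2 : (Qd y : ℝ) ≠ 0 := by exact_mod_cast (Qd_pos y).ne'
        have h3 : dsum y = m := by omega
        rw [h3] at h1
        field_simp at h1 ⊢
        linarith [h1]
      rw [hcast, hmap2, List.sum_map_mul_left, key_sum]
      have h2 : (Qd v : ℝ) ≠ 0 := by exact_mod_cast (Qd_pos v).ne'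
      rw [hm, Nat.factorial_succ]
      push_cast
      field_simp

lemma psum_zero (l : List Bool) : psum l 0 = 0 := by simp [psum, dsum]

lemma psum_pos {l : List Bool} {k : ℕ} (hk : k < l.length) : 0 < psum l (k + 1) := by
  apply dsum_pos
  intro h
  have := congrArg List.length h
  simp only [List.length_take, List.length_nil] at this
  omega

lemma psum_cons (c : Bool) (l : List Bool) (k : ℕ) :
    psum (c :: l) (k + 1) = (if c then 2 else 1) + psum l k := by
  simp [psum, List.take_succ_cons, dsum_cons]

/-- The product of the partial sums equals `Qd`. -/
lemma prod_psum (v : W) :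
    ∏ k ∈ Finset.range v.length, psum v.reverse (k + 1) = Qd v := by
  induction v with
  | nil => simp [Qd]
  | cons c s ih =>
    have hrev : (c :: s).reverse = s.reverse ++ [c] := by simp
    rw [hrev]
    have hlen : (c :: s).length = s.length + 1 := rfl
    rw [hlen, Finset.prod_range_succ]
    have h1 : ∀ k ∈ Finset.range s.length,
        psum (s.reverse ++ [c]) (k + 1) = psum s.reverse (k + 1) := by
      intro k hk
      rw [Finset.mem_range] at hk
      unfold psum
      rw [List.take_append_of_le_length (by simp; omega)]
    rw [Finset.prod_congr rfl h1, ih]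
    have h2 : psum (s.reverse ++ [c]) (s.length + 1) = dsum (c :: s) := by
      unfold psum
      rw [List.take_of_length_le (by simp), dsum_append, dsum_reverse, dsum_cons]
      simp [dsum]
      cases c <;> simp <;> omega
    rw [h2, Qd, Nat.mul_comm]

lemma f0_zero (l : List Bool) :
    f0 l 0 = ∏ k ∈ Finset.range l.length, (1 / (psum l (k + 1) : ℝ)) := by
  rw [f0, if_pos ⟨0, Nat.zero_le _, psum_zero l⟩]
  rw [Finset.prod_range_succ']
  have h0 : (if psum l 0 = 0 then (1:ℝ) else 1 / ((psum l 0 : ℝ) - ((0:ℕ) : ℝ))) = 1 := by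
    rw [if_pos (psum_zero l)]
  rw [h0, mul_one]
  apply Finset.prod_congr rfl
  intro k hk
  rw [Finset.mem_range] at hk
  have := psum_pos hk
  rw [if_neg (by omega)]
  norm_num

lemma f0_two (x : List Bool) : f0 (false :: false :: x) 0 = f0 (true :: x) 0 := by
  rw [f0_zero, f0_zero]
  show ∏ k ∈ Finset.range (x.length + 1 + 1), (1 / (psum (false :: false :: x) (k + 1) : ℝ))
      = ∏ k ∈ Finset.range (x.length + 1), (1 / (psum (true :: x) (k + 1) : ℝ))
  rw [Finset.prod_range_succ']
  have h0 : psum (false :: false :: x) (0 + 1) = 1 := by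
    simp [psum_cons, psum_zero]
  rw [h0, Nat.cast_one, div_one, mul_one]
  apply Finset.prod_congr rfl
  intro k _
  have h : psum (false :: false :: x) (k + 1 + 1) = psum (true :: x) (k + 1) := by
    simp only [psum_cons, Bool.false_eq_true, if_false, if_true]
    omega
  rw [h]

lemma fF_zero (l : List Bool) (z : ℕ) : fF l 0 z = f0 l 0 := by
  match l, z with
  | l, 0 => simp [fF]
  | [], z + 1 => simp [fF]
  | false :: x, z + 1 => simp [fF]
  | true :: x, z + 1 =>
    rw [fF]
    norm_num
    rw [show fF (false :: false :: x) 0 (z + 2) = f0 (false :: false :: x) 0 by simp [fF],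
      f0_two]

/-- `f(v, 0, z) = d_1(ε, v) / |v|!` for every `0 ≤ z ≤ #v`. -/
theorem stmt11 (v : W) (z : ℕ) (hz : z ≤ v.length) :
    fF v.reverse 0 z = (d1 [] v : ℝ) / (Nat.factorial (dsum v)) := by
  rw [fF_zero, f0_zero]
  have hlen : v.reverse.length = v.length := List.length_reverse
  have hq : ∏ k ∈ Finset.range v.reverse.length, (1 / (psum v.reverse (k + 1) : ℝ))
      = 1 / (Qd v : ℝ) := by
    rw [hlen]
    rw [show ∏ k ∈ Finset.range v.length, (1 / (psum v.reverse (k + 1) : ℝ))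
        = 1 / ((∏ k ∈ Finset.range v.length, psum v.reverse (k + 1) : ℕ) : ℝ) by
      push_cast
      rw [one_div, ← Finset.prod_inv_distrib]
      simp [one_div]]
    rw [prod_psum]
  rw [hq]
  have h := d1_mul_Qd (dsum v) v rfl
  have h1 : (Qd v : ℝ) ≠ 0 := by exact_mod_cast (Qd_pos v).ne'
  have h2 : ((Nat.factorial (dsum v)) : ℝ) ≠ 0 := by
    exact_mod_cast (Nat.factorial_pos (dsum v)).ne'
  field_simp
  linarith [h]
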